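/- If (M N) ▷* μα.P, then either (i) M ▷* λy.M₁ and M₁[y:=N] ▷* μα.P, or (ii) M ▷* μα.M₁ and M₁[α=_r N] ▷* P, or (iii) N ▷* μα.N₁ and N₁[α=_l M] ▷* P. -/

import Mathlib

/-- λμ-terms: variables, λ-abstraction, application, μ-abstraction, named term (α M). -/
inductive Trm : Type
  | var : ℕ → Trm
  | lam : ℕ → Trm → Trm
  | app : Trm → Trm → Trm
  | mu  : ℕ → Trm → Trm
  | mv  : ℕ → Trm → Trm
  deriving DecidableEq

namespace Trm

/-- Substitution M[x:=N]. -/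
def subst : Trm → ℕ → Trm → Trm
  | var y, x, N => if y = x then N else var y
  | lam y B, x, N => if y = x then lam y B else lam y (subst B x N)
  | app A B, x, N => app (subst A x N) (subst B x N)
  | mu a B, x, N => mu a (subst B x N)
  | mv a B, x, N => mv a (subst B x N)

/-- M[α=_r N]: replace each subterm (α U) by (α (U N)). -/
def rsub : Trm → ℕ → Trm → Trm
  | var y, _, _ => var y
  | lam y B, a, N => lam y (rsub B a N)
  | app A B, a, N => app (rsub A a N) (rsub B a N)
  | mu b B, a, N => if b = a then mu b B else mu b (rsub B a N)
  | mv b B, a, N => if b = a then mv b (app (rsub B a N) N) else mv b (rsub B a N)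

/-- M[α=_l N]: replace each subterm (α U) by (α (N U)). -/
def lsub : Trm → ℕ → Trm → Trm
  | var y, _, _ => var y
  | lam y B, a, N => lam y (lsub B a N)
  | app A B, a, N => app (lsub A a N) (lsub B a N)
  | mu b B, a, N => if b = a then mu b B else mu b (lsub B a N)
  | mv b B, a, N => if b = a then mv b (app N (lsub B a N)) else mv b (lsub B a N)

/-- One-step βμμ'-reduction (compatible closure). -/
inductive Red : Trm → Trm → Prop
  | beta (x M N) : Red (app (lam x M) N) (subst M x N)
  | muR (a M N) : Red (app (mu a M) N) (mu a (rsub M a N))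
  | muL (a M N) : Red (app M (mu a N)) (mu a (lsub N a M))
  | appL {M M'} (N) : Red M M' → Red (app M N) (app M' N)
  | appR (M) {N N'} : Red N N' → Red (app M N) (app M N')
  | lamC (x) {M M'} : Red M M' → Red (lam x M) (lam x M')
  | muC (a) {M M'} : Red M M' → Red (mu a M) (mu a M')
  | mvC (a) {M M'} : Red M M' → Red (mv a M) (mv a M')

/-- ▷*: reflexive transitive closure. -/
def Reds : Trm → Trm → Prop := Relation.ReflTransGen Red

/-- Strong normalization: no infinite reduction sequence. -/
def SN (M : Trm) : Prop := Acc (fun a b => Red b a) M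

/-- Left-nested application (h M₁ ... Mₙ). -/
def appList (h : Trm) (l : List Trm) : Trm := l.foldl app h

end Trm

/-
A reduct of `(M N)` stays an application until a head `β`-, `μ`- or `μ'`-step fires, and
`μα.P` is not an application, so such a step occurs. Reading the reduction backwards from it,
every earlier step inside `M` or `N` is absorbed: either into the reduction of `M` (resp. `N`)
to the head redex, or into the reduction of `M₁[y:=N]`, `M₁[α=_r N]` or `N₁[α=_l M]`, since
these substitutions are monotone in the substituted term.
-/

open Relation

namespace Trm

namespace Reds

lemma app_left {M M' : Trm} (N : Trm) (h : Reds M M') : Reds (app M N) (app M' N) :=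
  ReflTransGen.lift (fun X => app X N) (fun _ _ => Red.appL N) _ _ h

lemma app_right (M : Trm) {N N' : Trm} (h : Reds N N') : Reds (app M N) (app M N') :=
  ReflTransGen.lift (app M) (fun _ _ => Red.appR M) _ _ h

lemma app {M M' N N' : Trm} (hM : Reds M M') (hN : Reds N N') :
    Reds (app M N) (app M' N') :=
  (hM.app_left N).trans (hN.app_right M')

lemma lam (x : ℕ) {M M' : Trm} (h : Reds M M') : Reds (lam x M) (lam x M') :=
  ReflTransGen.lift (Trm.lam x) (fun _ _ => Red.lamC x) _ _ h

lemma mu (b : ℕ) {M M' : Trm} (h : Reds M M') : Reds (mu b M) (mu b M') :=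
  ReflTransGen.lift (Trm.mu b) (fun _ _ => Red.muC b) _ _ h

lemma mv (b : ℕ) {M M' : Trm} (h : Reds M M') : Reds (mv b M) (mv b M') :=
  ReflTransGen.lift (Trm.mv b) (fun _ _ => Red.mvC b) _ _ h

lemma exists_eq_mu_of_mu {b : ℕ} {X T : Trm} (h : Reds (Trm.mu b X) T) :
    ∃ X', T = Trm.mu b X' ∧ Reds X X' := by
  induction h with
  | refl => exact ⟨X, rfl, ReflTransGen.refl⟩
  | tail _ hstep ih =>
    obtain ⟨X', rfl, hX⟩ := ih
    cases hstep with
    | muC _ h' => exact ⟨_, rfl, hX.tail h'⟩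

lemma of_mu_mu {a b : ℕ} {X P : Trm} (h : Reds (Trm.mu b X) (Trm.mu a P)) :
    b = a ∧ Reds X P := by
  obtain ⟨X', hX, hXX'⟩ := h.exists_eq_mu_of_mu
  cases hX
  exact ⟨rfl, hXX'⟩

lemma subst_right (X : Trm) (y : ℕ) {N N' : Trm} (h : Reds N N') :
    Reds (subst X y N) (subst X y N') := by
  induction X with
  | var z =>
    simp only [subst]
    split
    · exact h
    · exact ReflTransGen.refl
  | lam z B ih =>
    simp only [subst]
    split
    · exact ReflTransGen.refl
    · exact ih.lam z
  | app A B ihA ihB => exact ihA.app ihB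
  | mu b B ih => exact ih.mu b
  | mv b B ih => exact ih.mv b

lemma rsub_right (X : Trm) (b : ℕ) {N N' : Trm} (h : Reds N N') :
    Reds (rsub X b N) (rsub X b N') := by
  induction X with
  | var z => exact ReflTransGen.refl
  | lam z B ih => exact ih.lam z
  | app A B ihA ihB => exact ihA.app ihB
  | mu c B ih =>
    simp only [rsub]
    split
    · exact ReflTransGen.refl
    · exact ih.mu c
  | mv c B ih =>
    simp only [rsub]
    split
    · exact (ih.app h).mv c
    · exact ih.mv c

lemma lsub_right (X : Trm) (b : ℕ) {M M' : Trm} (h : Reds M M') :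
    Reds (lsub X b M) (lsub X b M') := by
  induction X with
  | var z => exact ReflTransGen.refl
  | lam z B ih => exact ih.lam z
  | app A B ihA ihB => exact ihA.app ihB
  | mu c B ih =>
    simp only [lsub]
    split
    · exact ReflTransGen.refl
    · exact ih.mu c
  | mv c B ih =>
    simp only [lsub]
    split
    · exact (h.app ih).mv c
    · exact ih.mv c

end Reds

/-- The alternatives (i), (ii), (iii) for `(M N) ▷* μα.P`, with `α = a`. -/
def MuFactor (M N : Trm) (a : ℕ) (P : Trm) : Prop :=
  (∃ (y : ℕ) (M₁ : Trm), Reds M (lam y M₁) ∧ Reds (subst M₁ y N) (mu a P)) ∨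
  (∃ M₁ : Trm, Reds M (mu a M₁) ∧ Reds (rsub M₁ a N) P) ∨
  (∃ N₁ : Trm, Reds N (mu a N₁) ∧ Reds (lsub N₁ a M) P)

namespace MuFactor

variable {M M' N N' P : Trm} {a : ℕ}

lemma of_red_left (hM : Red M M') (h : MuFactor M' N a P) : MuFactor M N a P := by
  rcases h with ⟨y, M₁, hlam, hsub⟩ | ⟨M₁, hmu, hsub⟩ | ⟨N₁, hmu, hsub⟩
  · exact .inl ⟨y, M₁, hlam.head hM, hsub⟩
  · exact .inr (.inl ⟨M₁, hmu.head hM, hsub⟩)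
  · exact .inr (.inr ⟨N₁, hmu, (Reds.lsub_right N₁ a (.single hM)).trans hsub⟩)

lemma of_red_right (hN : Red N N') (h : MuFactor M N' a P) : MuFactor M N a P := by
  rcases h with ⟨y, M₁, hlam, hsub⟩ | ⟨M₁, hmu, hsub⟩ | ⟨N₁, hmu, hsub⟩
  · exact .inl ⟨y, M₁, hlam, (Reds.subst_right M₁ y (.single hN)).trans hsub⟩
  · exact .inr (.inl ⟨M₁, hmu, (Reds.rsub_right M₁ a (.single hN)).trans hsub⟩)
  · exact .inr (.inr ⟨N₁, hmu.head hN, hsub⟩)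

end MuFactor

end Trm

open Trm

theorem app_reds_mu {M N P : Trm} {a : ℕ}
    (h : Reds (app M N) (mu a P)) :
    (∃ (y : ℕ) (M₁ : Trm), Reds M (lam y M₁) ∧ Reds (subst M₁ y N) (mu a P)) ∨
    (∃ M₁ : Trm, Reds M (mu a M₁) ∧ Reds (rsub M₁ a N) P) ∨
    (∃ N₁ : Trm, Reds N (mu a N₁) ∧ Reds (lsub N₁ a M) P) := by
  suffices ∀ Q, Reds Q (mu a P) → ∀ M N, Q = app M N → MuFactor M N a P from
    this _ h M N rfl
  intro Q hQ
  induction hQ using ReflTransGen.head_induction_on with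
  | refl => intro M N hQ; cases hQ
  | head hstep htail ih =>
    rintro M N rfl
    cases hstep with
    | beta x M₁ N => exact .inl ⟨x, M₁, .refl, htail⟩
    | muR b M₁ N =>
      obtain ⟨rfl, hP⟩ := Reds.of_mu_mu htail
      exact .inr (.inl ⟨M₁, .refl, hP⟩)
    | muL b M N₁ =>
      obtain ⟨rfl, hP⟩ := Reds.of_mu_mu htail
      exact .inr (.inr ⟨N₁, .refl, hP⟩)
    | appL N hM => exact (ih _ _ rfl).of_red_left hM
    | appR M hN => exact (ih _ _ rfl).of_red_right hN
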